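/- arXiv:1710.06073 — 2 statements merged into one kernel-verified Lean document; each statement's English description precedes it below -/
import Mathlib

section
/- Let f = ∑_{i=1}^m f_i where each f_i : ℝ^n → ℝ is quasi-convex and continuous, X ⊆ ℝ^n nonempty closed convex, and suppose the component functions have a common minimizer over X (Assumption 1) and each f_i satisfies the Hölder condition of order p with modulus L_i ≤ L_max on X (Assumption 2). Let {x_k} be generated by the incremental subgradient method (Algorithm 1) with stepsizes v_k > 0. Then for any common minimizer x* and any k, ‖x_{k+1} - x*‖² ≤ ‖x_k - x*‖² - 2 v_k C_{p,m} (f(x_k) - f*)^{1/p} + m² v_k², where C_{p,m} = L_max^{-1/p} · min{1, (2m)^{1-1/p}} and f* = min_{x∈X} f(x). -/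
/-!
An inner step moves the iterate by at most `v`, and since the projection onto `X` does not
increase distances to points of `X`, it decreases `‖z - x*‖²` by at least `2v⟪g, z - x*⟫ - v²`.
Hölder continuity at `x*` puts the ball of radius `rᵢ = ((fᵢ z - fᵢ*) / L) ^ (1/p)` about `x*`
inside the strict sublevel set `{fᵢ < fᵢ z}`, which the quasi-subgradient `g` separates from `z`;
hence `⟪g, z - x*⟫ ≥ rᵢ`, and a pass decreases `‖x - x*‖²` by at least `2v ∑ᵢ rᵢ - m v²`.
Hölder continuity at `x_k` and the drift `‖zᵢ - x_k‖ ≤ i v` give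
`(f(x_k) - f*) / L ≤ ∑ᵢ (rᵢ ^ p + (i v) ^ p)`, a sum of `p`-th powers of `2m` numbers. Comparing
the `ℓ^p` and `ℓ^1` norms on `ℝ^{2m}`, `min 1 ((2m) ^ (1 - 1/p)) ‖c‖_p ≤ ‖c‖_1`, bounds
`C_{p,m} (f(x_k) - f*) ^ (1/p)` by `∑ᵢ rᵢ + v m(m-1)/2`, and the last term accounts for the
extra `(m² - m) v²`.
-/

open Finset RealInnerProductSpace

theorem Fin.sum_univ_val_cast (m : ℕ) : ∑ i : Fin m, (i : ℝ) = ((m : ℝ) ^ 2 - m) / 2 := by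
  rw [Fin.sum_univ_eq_sum_range (fun i => (i : ℝ)) m]
  induction m with
  | zero => simp
  | succ m ih => rw [sum_range_succ, ih]; push_cast; ring

theorem Real.rpow_sum_le_sum_rpow {ι : Type*} (s : Finset ι) {f : ι → ℝ} (hf : ∀ i ∈ s, 0 ≤ f i)
    {q : ℝ} (hq₀ : 0 < q) (hq₁ : q ≤ 1) : (∑ i ∈ s, f i) ^ q ≤ ∑ i ∈ s, f i ^ q :=
  Finset.le_sum_of_subadditive_on_pred (· ^ q) (0 ≤ ·) (Real.zero_rpow hq₀.ne').le
    (fun _ _ ha hb => Real.rpow_add_le_add_rpow ha hb hq₀.le hq₁) (fun _ _ => add_nonneg) f hf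

theorem Real.min_one_mul_rpow_sum_rpow_le_sum {ι : Type*} [Fintype ι] {c : ι → ℝ}
    (hc : ∀ i, 0 ≤ c i) {p : ℝ} (hp : 0 < p) :
    min 1 ((Fintype.card ι : ℝ) ^ (1 - 1 / p)) * (∑ i, c i ^ p) ^ (1 / p) ≤ ∑ i, c i := by
  have hcp : ∀ i ∈ univ, 0 ≤ c i ^ p := fun i _ => Real.rpow_nonneg (hc i) p
  have hinv : ∀ i, (c i ^ p) ^ (1 / p) = c i := fun i => by
    rw [one_div, Real.rpow_rpow_inv (hc i) hp.ne']
  have hS : 0 ≤ (∑ i, c i ^ p) ^ (1 / p) := Real.rpow_nonneg (sum_nonneg hcp) _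
  rcases le_or_gt 1 p with hp₁ | hp₁
  · calc min 1 _ * (∑ i, c i ^ p) ^ (1 / p) ≤ 1 * (∑ i, c i ^ p) ^ (1 / p) := by
          gcongr; exact min_le_left _ _
      _ ≤ ∑ i, (c i ^ p) ^ (1 / p) := by
          rw [one_mul]
          exact Real.rpow_sum_le_sum_rpow _ hcp (by positivity) (div_le_one_of_le₀ hp₁ hp.le)
      _ = ∑ i, c i := by simp only [hinv]
  · have hq : 1 < 1 / p := by rw [lt_div_iff₀ hp]; linarith
    set N : ℝ := (Fintype.card ι : ℝ)
    have hN : N ^ (1 - 1 / p) * N ^ (1 / p - 1) ≤ 1 := by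
      rcases (Fintype.card ι).eq_zero_or_pos with h | h
      · rw [show N = 0 by simp [N, h], Real.zero_rpow (sub_ne_zero.2 hq.ne), zero_mul]
        exact zero_le_one
      · rw [← Real.rpow_add (by positivity)]; simp
    calc min 1 (N ^ (1 - 1 / p)) * (∑ i, c i ^ p) ^ (1 / p)
        ≤ N ^ (1 - 1 / p) * (N ^ (1 / p - 1) * ∑ i, (c i ^ p) ^ (1 / p)) := by
          gcongr
          · exact min_le_right _ _
          · simpa using Real.rpow_sum_le_const_mul_sum_rpow_of_nonneg univ hq.le hcp
      _ ≤ ∑ i, c i := by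
          rw [← mul_assoc]; simp only [hinv]
          exact mul_le_of_le_one_left (sum_nonneg fun i _ => hc i) hN

section IncrementalSubgradient

variable {E : Type*} [NormedAddCommGroup E] [InnerProductSpace ℝ E]

def IsMetricProjection (X : Set E) (proj : E → E) : Prop :=
  ∀ y, proj y ∈ X ∧ ∀ w ∈ X, ‖proj y - y‖ ≤ ‖w - y‖

theorem IsMetricProjection.norm_sub_le {X : Set E} {proj : E → E}
    (hproj : IsMetricProjection X proj) (hX : Convex ℝ X) (y : E) {w : E} (hw : w ∈ X) :
    ‖proj y - w‖ ≤ ‖y - w‖ := by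
  obtain ⟨hyX, hnear⟩ := hproj y
  have : Nonempty X := ⟨⟨proj y, hyX⟩⟩
  have hinf : ‖y - proj y‖ = ⨅ w : X, ‖y - (w : E)‖ :=
    le_antisymm (le_ciInf fun w => by simpa only [norm_sub_rev y] using hnear w w.2)
      (ciInf_le ⟨0, Set.forall_mem_range.2 fun _ => norm_nonneg _⟩ (⟨proj y, hyX⟩ : X))
  have hvi : ⟪y - proj y, w - proj y⟫ ≤ 0 :=
    (norm_eq_iInf_iff_real_inner_le_zero hX hyX).1 hinf w hw
  have hexpand : ‖y - w‖ ^ 2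
      = ‖y - proj y‖ ^ 2 - 2 * ⟪y - proj y, w - proj y⟫ + ‖proj y - w‖ ^ 2 := by
    rw [show y - w = (y - proj y) - (w - proj y) by abel, norm_sub_sq_real, norm_sub_rev w]
  refine (pow_le_pow_iff_left₀ (norm_nonneg _) (norm_nonneg _) two_ne_zero).1 ?_
  linarith [sq_nonneg ‖y - proj y‖]

theorem IsMetricProjection.sq_norm_sub_sub_smul_le {X : Set E} {proj : E → E}
    (hproj : IsMetricProjection X proj) (hX : Convex ℝ X) {x : E} (hx : x ∈ X) (z : E)
    {g : E} (hg : ‖g‖ = 1) (v : ℝ) :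
    ‖proj (z - v • g) - x‖ ^ 2 ≤ ‖z - x‖ ^ 2 - 2 * v * ⟪g, z - x⟫ + v ^ 2 := by
  calc ‖proj (z - v • g) - x‖ ^ 2 ≤ ‖(z - x) - v • g‖ ^ 2 := by
        rw [sub_right_comm]; gcongr; exact hproj.norm_sub_le hX _ hx
    _ = ‖z - x‖ ^ 2 - 2 * v * ⟪g, z - x⟫ + v ^ 2 := by
        rw [norm_sub_sq_real, real_inner_smul_right, real_inner_comm, norm_smul, hg,
          Real.norm_eq_abs, mul_one, sq_abs]
        ring

def IsQuasiSubgradient (φ : E → ℝ) (z g : E) : Prop :=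
  ∀ y, φ y < φ z → ⟪g, y - z⟫ ≤ 0

theorem IsQuasiSubgradient.le_inner {φ : E → ℝ} {z g : E} (hg : IsQuasiSubgradient φ z g)
    (hg₁ : ‖g‖ = 1) {x : E} {t : ℝ} (ht : φ (x + t • g) < φ z) : t ≤ ⟪g, z - x⟫ := by
  have h := hg _ ht
  rw [show x + t • g - z = t • g - (z - x) by abel, inner_sub_right, real_inner_smul_right,
    real_inner_self_eq_norm_sq, hg₁] at h
  linarith

theorem IsQuasiSubgradient.rpow_div_le_inner {φ : E → ℝ} {z g : E}
    (hg : IsQuasiSubgradient φ z g) (hg₁ : ‖g‖ = 1) {x : E} {p L : ℝ} (hp : 0 < p) (hL : 0 < L)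
    (hgrowth : ∀ y, φ y ≤ φ x + L * ‖y - x‖ ^ p) (hlt : φ x < φ z) :
    ((φ z - φ x) / L) ^ (1 / p) ≤ ⟪g, z - x⟫ := by
  have hr : (((φ z - φ x) / L) ^ (1 / p)) ^ p = (φ z - φ x) / L := by
    rw [one_div, Real.rpow_inv_rpow (div_nonneg (sub_nonneg.2 hlt.le) hL.le) hp.ne']
  set r := ((φ z - φ x) / L) ^ (1 / p)
  have hball : ∀ t, 0 ≤ t → t < r → t ≤ ⟪g, z - x⟫ := fun t ht₀ htr => by
    refine hg.le_inner hg₁ (lt_of_le_of_lt (hgrowth _) ?_)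
    rw [add_sub_cancel_left, norm_smul, hg₁, mul_one, Real.norm_eq_abs, abs_of_nonneg ht₀]
    have := Real.rpow_lt_rpow ht₀ htr hp
    rw [hr, lt_div_iff₀ hL] at this
    linarith
  by_contra! hlt'
  have h₀ : 0 ≤ ⟪g, z - x⟫ :=
    hball 0 le_rfl (Real.rpow_pos_of_pos (div_pos (sub_pos.2 hlt) hL) _)
  linarith [hball ((⟪g, z - x⟫ + r) / 2) (by linarith) (by linarith)]

/-- One inner step `z_{k,i-1} ↦ z_{k,i}` of the method; `φmin` stands for `f_i* = min_X f_i`. -/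
def IncrementalStep (proj : E → E) (v : ℝ) (φ : E → ℝ) (φmin : ℝ) (z z' : E) : Prop :=
  (φ z = φmin ∧ z' = z) ∨
    (φmin < φ z ∧ ∃ g : E, ‖g‖ = 1 ∧ IsQuasiSubgradient φ z g ∧ z' = proj (z - v • g))

namespace IncrementalStep

variable {X : Set E} {proj : E → E} {v : ℝ} {φ : E → ℝ} {φmin : ℝ} {z z' : E}

theorem mem (h : IncrementalStep proj v φ φmin z z') (hproj : IsMetricProjection X proj)
    (hz : z ∈ X) : z' ∈ X := by
  rcases h with ⟨-, rfl⟩ | ⟨-, g, -, -, rfl⟩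
  exacts [hz, (hproj _).1]

theorem norm_sub_le (h : IncrementalStep proj v φ φmin z z') (hproj : IsMetricProjection X proj)
    (hX : Convex ℝ X) (hz : z ∈ X) (hv : 0 ≤ v) : ‖z' - z‖ ≤ v := by
  rcases h with ⟨-, rfl⟩ | ⟨-, g, hg₁, -, rfl⟩
  · simpa using hv
  · calc ‖proj (z - v • g) - z‖ ≤ ‖(z - v • g) - z‖ := hproj.norm_sub_le hX _ hz
      _ = v := by
        rw [sub_sub_cancel_left, norm_neg, norm_smul, hg₁, mul_one, Real.norm_of_nonneg hv]

theorem sq_norm_sub_le {x : E} (h : IncrementalStep proj v φ (φ x) z z')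
    (hproj : IsMetricProjection X proj) (hX : Convex ℝ X) (hx : x ∈ X) (hv : 0 ≤ v) {p L : ℝ}
    (hp : 0 < p) (hL : 0 < L) (hgrowth : ∀ y, φ y ≤ φ x + L * ‖y - x‖ ^ p) :
    ‖z' - x‖ ^ 2 ≤ ‖z - x‖ ^ 2 - 2 * v * ((φ z - φ x) / L) ^ (1 / p) + v ^ 2 := by
  rcases h with ⟨heq, rfl⟩ | ⟨hlt, g, hg₁, hg, rfl⟩
  · rw [heq, sub_self, zero_div, Real.zero_rpow (one_div_pos.2 hp).ne']
    linarith [sq_nonneg v]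
  · have hr := mul_le_mul_of_nonneg_left (hg.rpow_div_le_inner hg₁ hp hL hgrowth hlt)
      (by positivity : (0 : ℝ) ≤ 2 * v)
    linarith [hproj.sq_norm_sub_sub_smul_le hX hx z hg₁ v]

end IncrementalStep

section Pass

variable {m : ℕ} {X : Set E} {proj : E → E} {v : ℝ} {f : Fin m → E → ℝ} {fmin : Fin m → ℝ}
  {z : ℕ → E}

theorem IncrementalStep.pass_mem (hproj : IsMetricProjection X proj)
    (hstep : ∀ i : Fin m, IncrementalStep proj v (f i) (fmin i) (z i) (z ((i : ℕ) + 1)))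
    (hz : z 0 ∈ X) : ∀ i ≤ m, z i ∈ X := by
  intro i hi
  induction i with
  | zero => exact hz
  | succ i ih => exact (hstep ⟨i, hi⟩).mem hproj (ih (by omega))

theorem IncrementalStep.pass_norm_sub_le (hproj : IsMetricProjection X proj) (hX : Convex ℝ X)
    (hstep : ∀ i : Fin m, IncrementalStep proj v (f i) (fmin i) (z i) (z ((i : ℕ) + 1)))
    (hz : z 0 ∈ X) (hv : 0 ≤ v) {i : ℕ} (hi : i ≤ m) : ‖z i - z 0‖ ≤ i * v := by
  have hmem := IncrementalStep.pass_mem hproj hstep hz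
  rw [← dist_eq_norm, dist_comm]
  simpa using dist_le_range_sum_of_dist_le (d := fun _ => v) i fun {k} hk => by
    rw [dist_comm, dist_eq_norm]
    exact (hstep ⟨k, by omega⟩).norm_sub_le hproj hX (hmem k (by omega)) hv

theorem IncrementalStep.pass_sq_norm_sub_le {x : E} (hproj : IsMetricProjection X proj)
    (hX : Convex ℝ X) (hx : x ∈ X) (hv : 0 ≤ v) {p L : ℝ} (hp : 0 < p) (hL : 0 < L)
    (hgrowth : ∀ i, ∀ y, f i y ≤ f i x + L * ‖y - x‖ ^ p)
    (hstep : ∀ i : Fin m, IncrementalStep proj v (f i) (f i x) (z i) (z ((i : ℕ) + 1))) :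
    ‖z m - x‖ ^ 2 ≤ ‖z 0 - x‖ ^ 2
      - 2 * v * ∑ i : Fin m, ((f i (z i) - f i x) / L) ^ (1 / p) + m * v ^ 2 := by
  have htele : ∑ i : Fin m, (‖z ((i : ℕ) + 1) - x‖ ^ 2 - ‖z i - x‖ ^ 2)
      = ‖z m - x‖ ^ 2 - ‖z 0 - x‖ ^ 2 := by
    rw [Fin.sum_univ_eq_sum_range (fun i => ‖z (i + 1) - x‖ ^ 2 - ‖z i - x‖ ^ 2),
      sum_range_sub (fun i => ‖z i - x‖ ^ 2)]
  calc ‖z m - x‖ ^ 2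
        = ‖z 0 - x‖ ^ 2 + ∑ i : Fin m, (‖z ((i : ℕ) + 1) - x‖ ^ 2 - ‖z i - x‖ ^ 2) := by
        rw [htele]; ring
    _ ≤ ‖z 0 - x‖ ^ 2
          + ∑ i : Fin m, (v ^ 2 - 2 * v * ((f i (z i) - f i x) / L) ^ (1 / p)) := by
        gcongr ‖z 0 - x‖ ^ 2 + ∑ i, ?_ with i
        linarith [(hstep i).sq_norm_sub_le hproj hX hx hv hp hL (hgrowth i)]
    _ = _ := by simp only [sum_sub_distrib, ← mul_sum, sum_const, card_univ, Fintype.card_fin,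
          nsmul_eq_mul]; ring

theorem IncrementalStep.pass_sum_le (hproj : IsMetricProjection X proj) (hX : Convex ℝ X)
    (hstep : ∀ i : Fin m, IncrementalStep proj v (f i) (fmin i) (z i) (z ((i : ℕ) + 1)))
    (hz : z 0 ∈ X) (hv : 0 ≤ v) {p L : ℝ} (hp : 0 ≤ p) (hL : 0 ≤ L)
    (hHolder : ∀ i, ∀ y ∈ X, ∀ w, |f i w - f i y| ≤ L * ‖w - y‖ ^ p) :
    ∑ i, f i (z 0) ≤ ∑ i, f i (z i) + L * ∑ i : Fin m, ((i : ℝ) * v) ^ p := by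
  rw [mul_sum, ← sum_add_distrib]
  refine sum_le_sum fun i _ => ?_
  have hdrift : ‖z i - z 0‖ ^ p ≤ ((i : ℝ) * v) ^ p := Real.rpow_le_rpow (norm_nonneg _)
    (IncrementalStep.pass_norm_sub_le hproj hX hstep hz hv i.2.le) hp
  linarith [(abs_le.1 (hHolder i (z 0) hz (z i))).1, mul_le_mul_of_nonneg_left hdrift hL]

theorem IncrementalStep.pass_estimate {x : E} (hproj : IsMetricProjection X proj)
    (hX : Convex ℝ X) (hx : x ∈ X) (hv : 0 ≤ v) {p L : ℝ} (hp : 0 < p) (hL : 0 < L)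
    (hHolder : ∀ i, ∀ y ∈ X, ∀ w, |f i w - f i y| ≤ L * ‖w - y‖ ^ p)
    (hmin : ∀ i, ∀ y ∈ X, f i x ≤ f i y)
    (hstep : ∀ i : Fin m, IncrementalStep proj v (f i) (f i x) (z i) (z ((i : ℕ) + 1)))
    (hz : z 0 ∈ X) :
    ‖z m - x‖ ^ 2 ≤ ‖z 0 - x‖ ^ 2
      - 2 * v * (L ^ (-(1 / p)) * min 1 ((2 * (m : ℝ)) ^ (1 - 1 / p)))
          * ((∑ i, f i (z 0)) - ∑ i, f i x) ^ (1 / p) + (m : ℝ) ^ 2 * v ^ 2 := by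
  have hmem := IncrementalStep.pass_mem hproj hstep hz
  have hdescent := IncrementalStep.pass_sq_norm_sub_le hproj hX hx hv hp hL
    (fun i y => by linarith [(abs_le.1 (hHolder i x hx y)).2]) hstep
  have hgap : ∀ i : Fin m, 0 ≤ (f i (z i) - f i x) / L := fun i =>
    div_nonneg (sub_nonneg.2 (hmin i _ (hmem i i.2.le))) hL.le
  have he : ∀ i : Fin m, (((f i (z i) - f i x) / L) ^ (1 / p)) ^ p = (f i (z i) - f i x) / L :=
    fun i => by rw [one_div, Real.rpow_inv_rpow (hgap i) hp.ne']
  set e : Fin m → ℝ := fun i => ((f i (z i) - f i x) / L) ^ (1 / p)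
  have hS : 0 ≤ ∑ i, f i (z 0) - ∑ i, f i x := by
    rw [← sum_sub_distrib]; exact sum_nonneg fun i _ => sub_nonneg.2 (hmin i _ hz)
  set S := ∑ i, f i (z 0) - ∑ i, f i x
  have hSle : S / L ≤ ∑ i, e i ^ p + ∑ i : Fin m, ((i : ℝ) * v) ^ p := by
    have := IncrementalStep.pass_sum_le hproj hX hstep hz hv hp.le hL.le hHolder
    rw [div_le_iff₀ hL, add_mul, sum_congr rfl fun i _ => he i, ← sum_div,
      div_mul_cancel₀ _ hL.ne', sum_sub_distrib]
    linarith
  have hc : ∀ j, 0 ≤ Sum.elim e (fun i : Fin m => (i : ℝ) * v) j := by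
    rintro (i | i)
    exacts [Real.rpow_nonneg (hgap i) _, mul_nonneg i.val.cast_nonneg hv]
  have hbound : L ^ (-(1 / p)) * min 1 ((2 * (m : ℝ)) ^ (1 - 1 / p)) * S ^ (1 / p)
      ≤ ∑ i, e i + v * (((m : ℝ) ^ 2 - m) / 2) := by
    calc _ = min 1 ((2 * (m : ℝ)) ^ (1 - 1 / p)) * (S / L) ^ (1 / p) := by
          rw [Real.div_rpow hS hL.le, Real.rpow_neg hL.le]; ring
      _ ≤ min 1 ((2 * (m : ℝ)) ^ (1 - 1 / p))
          * (∑ i, e i ^ p + ∑ i : Fin m, ((i : ℝ) * v) ^ p) ^ (1 / p) := by gcongr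
      _ ≤ ∑ i, e i + ∑ i : Fin m, (i : ℝ) * v := by
          simpa [two_mul, Fintype.sum_sum_type] using
            Real.min_one_mul_rpow_sum_rpow_le_sum hc hp
      _ = ∑ i, e i + v * (((m : ℝ) ^ 2 - m) / 2) := by
          rw [← sum_mul, Fin.sum_univ_val_cast, mul_comm]
  linarith [mul_le_mul_of_nonneg_left hbound (by positivity : (0 : ℝ) ≤ 2 * v)]

end Pass

end IncrementalSubgradient

theorem stmt8_general {n m : ℕ}
    (f : Fin m → EuclideanSpace ℝ (Fin n) → ℝ)
    (X : Set (EuclideanSpace ℝ (Fin n)))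
    (hXconv : Convex ℝ X)
    (p Lmax : ℝ) (hp : 0 < p) (hL : 0 < Lmax)
    -- Hölder condition of order p with moduli ≤ Lmax on X (Assumption 2)
    (hHolder : ∀ i, ∀ x ∈ X, ∀ y, |f i y - f i x| ≤ Lmax * ‖y - x‖ ^ p)
    -- common minimizer of all components over X (Assumption 1)
    (xstar : EuclideanSpace ℝ (Fin n)) (hxsX : xstar ∈ X)
    (hmin : ∀ i, ∀ y ∈ X, f i xstar ≤ f i y)
    -- projection onto X
    (proj : EuclideanSpace ℝ (Fin n) → EuclideanSpace ℝ (Fin n))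
    (hproj : ∀ y, proj y ∈ X ∧ ∀ w ∈ X, ‖proj y - y‖ ≤ ‖w - y‖)
    -- stepsizes
    (v : ℕ → ℝ) (hv : ∀ k, 0 < v k)
    -- the iterates of Algorithm 1
    (x : ℕ → EuclideanSpace ℝ (Fin n)) (z : ℕ → ℕ → EuclideanSpace ℝ (Fin n))
    (hx0 : x 0 ∈ X)
    (hz0 : ∀ k, z k 0 = x k)
    (hstep : ∀ k, ∀ i : Fin m,
      (f i (z k i) = f i xstar ∧ z k ((i : ℕ) + 1) = z k i) ∨
      (f i xstar < f i (z k i) ∧ ∃ g : EuclideanSpace ℝ (Fin n), ‖g‖ = 1 ∧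
        (∀ y, f i y < f i (z k i) → (inner ℝ g (y - z k i) : ℝ) ≤ 0) ∧
        z k ((i : ℕ) + 1) = proj (z k i - v k • g)))
    (hxsucc : ∀ k, x (k + 1) = z k m) :
    ∀ k, ‖x (k + 1) - xstar‖ ^ 2 ≤ ‖x k - xstar‖ ^ 2
      - 2 * v k * (Lmax ^ (-(1 / p)) * min 1 ((2 * (m : ℝ)) ^ (1 - 1 / p)))
          * ((∑ i, f i (x k)) - ∑ i, f i xstar) ^ (1 / p)
      + (m : ℝ) ^ 2 * v k ^ 2 := by
  have hxX : ∀ k, x k ∈ X := by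
    intro k
    induction k with
    | zero => exact hx0
    | succ k ih =>
      rw [hxsucc]
      exact IncrementalStep.pass_mem hproj (hstep k) (by rwa [hz0]) m le_rfl
  intro k
  have hpass := IncrementalStep.pass_estimate hproj hXconv hxsX (hv k).le hp hL hHolder hmin
    (hstep k) (by rw [hz0]; exact hxX k)
  rwa [hz0, ← hxsucc] at hpass

/-- Basic inequality for the incremental subgradient method (Lemma 3.1). -/
theorem stmt8 {n m : ℕ} (hm : 0 < m)
    (f : Fin m → EuclideanSpace ℝ (Fin n) → ℝ)
    (X : Set (EuclideanSpace ℝ (Fin n))) (hXne : X.Nonempty)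
    (hXc : IsClosed X) (hXconv : Convex ℝ X)
    (hqc : ∀ i, QuasiconvexOn ℝ Set.univ (f i)) (hcont : ∀ i, Continuous (f i))
    (p Lmax : ℝ) (hp : 0 < p) (hL : 0 < Lmax)
    -- Hölder condition of order p with moduli ≤ Lmax on X (Assumption 2)
    (hHolder : ∀ i, ∀ x ∈ X, ∀ y, |f i y - f i x| ≤ Lmax * ‖y - x‖ ^ p)
    -- common minimizer of all components over X (Assumption 1)
    (xstar : EuclideanSpace ℝ (Fin n)) (hxsX : xstar ∈ X)
    (hmin : ∀ i, ∀ y ∈ X, f i xstar ≤ f i y)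
    -- projection onto X
    (proj : EuclideanSpace ℝ (Fin n) → EuclideanSpace ℝ (Fin n))
    (hproj : ∀ y, proj y ∈ X ∧ ∀ w ∈ X, ‖proj y - y‖ ≤ ‖w - y‖)
    -- stepsizes
    (v : ℕ → ℝ) (hv : ∀ k, 0 < v k)
    -- the iterates of Algorithm 1
    (x : ℕ → EuclideanSpace ℝ (Fin n)) (z : ℕ → ℕ → EuclideanSpace ℝ (Fin n))
    (hx0 : x 0 ∈ X)
    (hz0 : ∀ k, z k 0 = x k)
    (hstep : ∀ k, ∀ i : Fin m,
      (f i (z k i) = f i xstar ∧ z k ((i : ℕ) + 1) = z k i) ∨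
      (f i xstar < f i (z k i) ∧ ∃ g : EuclideanSpace ℝ (Fin n), ‖g‖ = 1 ∧
        (∀ y, f i y < f i (z k i) → (inner ℝ g (y - z k i) : ℝ) ≤ 0) ∧
        z k ((i : ℕ) + 1) = proj (z k i - v k • g)))
    (hxsucc : ∀ k, x (k + 1) = z k m) :
    ∀ k, ‖x (k + 1) - xstar‖ ^ 2 ≤ ‖x k - xstar‖ ^ 2
      - 2 * v k * (Lmax ^ (-(1 / p)) * min 1 ((2 * (m : ℝ)) ^ (1 - 1 / p)))
          * ((∑ i, f i (x k)) - ∑ i, f i xstar) ^ (1 / p)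
      + (m : ℝ) ^ 2 * v k ^ 2 :=
  stmt8_general f X hXconv p Lmax hp hL hHolder xstar hxsX hmin proj hproj v hv x z hx0 hz0 hstep
    hxsucc
end

section
/- Let {x_k} satisfy, for every x* ∈ X* ≠ ∅, the inequality ‖x_{k+1} - x*‖² ≤ ‖x_k - x*‖² - γ_k(2 - γ_k) (C²/m²) (f(x_k) - f*)^{2/p} for all k, where 0 < γ_lo ≤ γ_k ≤ γ_hi < 2, C > 0, p > 0, f continuous, f(x_k) ≥ f*, and X* = argmin_X f. Then f(x_k) → f* and {x_k} converges to a point of X*. -/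
/-!
The basic inequality makes `‖x k - x*‖` nonincreasing for every `x* ∈ X*` and, after
telescoping, gives `∑ (f (x k) - f*) ^ (2/p) < ∞`, so `f (x k) → f*`. The sequence is then
bounded, so it has a cluster point; by closedness of `X` and continuity of `f` every cluster
point lies in `X*`, and a Fejér monotone sequence converges to any of its cluster points in `X*`.
-/

open Filter Topology Metric

theorem summable_of_le_sub_succ {a t : ℕ → ℝ} (ht : ∀ k, 0 ≤ t k) (ha : ∀ k, 0 ≤ a k)
    (h : ∀ k, t k ≤ a k - a (k + 1)) : Summable t :=
  summable_of_sum_range_le ht fun n =>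
    calc ∑ k ∈ Finset.range n, t k
        ≤ ∑ k ∈ Finset.range n, (a k - a (k + 1)) := Finset.sum_le_sum fun k _ => h k
      _ = a 0 - a n := Finset.sum_range_sub' a n
      _ ≤ a 0 := sub_le_self _ (ha n)

theorem antitone_of_le_sq_sub_sq {d t : ℕ → ℝ} (hd : ∀ k, 0 ≤ d k) (ht : ∀ k, 0 ≤ t k)
    (h : ∀ k, t k ≤ d k ^ 2 - d (k + 1) ^ 2) : Antitone d :=
  antitone_nat_of_succ_le fun k =>
    (pow_le_pow_iff_left₀ (hd _) (hd _) two_ne_zero).1 (by linarith [h k, ht k])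

theorem mul_le_sub_of_le_sub_mul_two_sub {d₀ d₁ g lo hi K s : ℝ} (hlo : 0 ≤ lo)
    (hg : lo ≤ g ∧ g ≤ hi) (hhi : hi ≤ 2) (hK : 0 ≤ K) (hs : 0 ≤ s)
    (h : d₁ ≤ d₀ - g * (2 - g) * K * s) : lo * (2 - hi) * K * s ≤ d₀ - d₁ := by
  have hγ : lo * (2 - hi) ≤ g * (2 - g) :=
    mul_le_mul hg.1 (by linarith [hg.2]) (by linarith) (by linarith [hg.1])
  linarith [mul_le_mul_of_nonneg_right (mul_le_mul_of_nonneg_right hγ hK) hs]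

theorem tendsto_zero_of_tendsto_rpow_zero {α : Type*} {l : Filter α} {s : α → ℝ} {q : ℝ}
    (hq : 0 < q) (hs : ∀ i, 0 ≤ s i) (h : Tendsto (fun i => s i ^ q) l (𝓝 0)) :
    Tendsto s l (𝓝 0) := by
  have h' := h.rpow_const_nhds_zero (p := q⁻¹) (inv_pos.2 hq)
  simpa only [Real.rpow_rpow_inv (hs _) hq.ne'] using h'

theorem MapClusterPt.eq_of_tendsto {α X : Type*} [TopologicalSpace X] [T2Space X]
    {F : Filter α} {u : α → X} {a b : X} (ha : MapClusterPt a F u) (hb : Tendsto u F (𝓝 b)) :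
    a = b :=
  eq_of_nhds_neBot (ha.neBot.mono (inf_le_inf_left _ hb))

theorem MapClusterPt.isMinOn_of_tendsto {α E : Type*} [TopologicalSpace E] {F : Filter α}
    {u : α → E} {X : Set E} {f : E → ℝ} {a b : E} (ha : MapClusterPt a F u) (hX : IsClosed X)
    (huX : ∀ᶠ k in F, u k ∈ X) (hf : ContinuousAt f a) (hb : IsMinOn f X b)
    (hfu : Tendsto (f ∘ u) F (𝓝 (f b))) : a ∈ X ∧ IsMinOn f X a := by
  have hfa : f a = f b := (ha.continuousAt_comp hf).eq_of_tendsto hfu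
  exact ⟨hX.mem_of_mapClusterPt ha huX, isMinOn_iff.2 fun w hw => hfa ▸ isMinOn_iff.1 hb w hw⟩

section Fejer

variable {X : Type*} [MetricSpace X] {x : ℕ → X}

theorem tendsto_of_antitone_dist_of_mapClusterPt {a : X}
    (hanti : Antitone fun k => dist (x k) a) (ha : MapClusterPt a atTop x) :
    Tendsto x atTop (𝓝 a) := by
  obtain ⟨L, hL⟩ : ∃ L, Tendsto (fun k => dist (x k) a) atTop (𝓝 L) :=
    ⟨_, tendsto_atTop_ciInf hanti ⟨0, by rintro _ ⟨k, rfl⟩; exact dist_nonneg⟩⟩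
  have hclust : MapClusterPt (dist a a) atTop fun k => dist (x k) a :=
    ha.continuousAt_comp (continuous_id.dist continuous_const).continuousAt
  rw [← hclust.eq_of_tendsto hL, dist_self] at hL
  exact tendsto_iff_dist_tendsto_zero.2 hL

theorem exists_tendsto_of_antitone_dist [ProperSpace X] {S : Set X} (hS : S.Nonempty)
    (hanti : ∀ a ∈ S, Antitone fun k => dist (x k) a)
    (hclust : ∀ a, MapClusterPt a atTop x → a ∈ S) : ∃ a ∈ S, Tendsto x atTop (𝓝 a) := by
  obtain ⟨z, hz⟩ := hS
  have hball : ∀ k, x k ∈ closedBall z (dist (x 0) z) := fun k => hanti z hz (Nat.zero_le k)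
  obtain ⟨a, -, ha⟩ := (isCompact_closedBall z _).exists_mapClusterPt (f := atTop)
    (tendsto_principal.2 (.of_forall hball))
  exact ⟨a, hclust a ha, tendsto_of_antitone_dist_of_mapClusterPt (hanti a (hclust a ha)) ha⟩

end Fejer

/-- Abstract form of Theorem 3.4: dynamic stepsize rule. -/
theorem stmt12 {n : ℕ} (x : ℕ → EuclideanSpace ℝ (Fin n))
    (X : Set (EuclideanSpace ℝ (Fin n))) (hXc : IsClosed X)
    (f : EuclideanSpace ℝ (Fin n) → ℝ) (fstar C m p : ℝ)
    (hC : 0 < C) (hm : 1 ≤ m) (hp : 0 < p)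
    (hcont : Continuous f)
    (Xstar : Set (EuclideanSpace ℝ (Fin n)))
    (hXstar : Xstar = {y ∈ X | ∀ w ∈ X, f y ≤ f w}) (hne : Xstar.Nonempty)
    (hfstar : ∀ y ∈ Xstar, f y = fstar)
    (hxX : ∀ k, x k ∈ X)
    (hf : ∀ k, fstar ≤ f (x k))
    (γ : ℕ → ℝ) (γlo γhi : ℝ) (hγlo : 0 < γlo) (hγhi : γhi < 2)
    (hγ : ∀ k, γlo ≤ γ k ∧ γ k ≤ γhi)
    (hBI : ∀ xs ∈ Xstar, ∀ k, ‖x (k + 1) - xs‖ ^ 2 ≤ ‖x k - xs‖ ^ 2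
        - γ k * (2 - γ k) * (C ^ 2 / m ^ 2) * (f (x k) - fstar) ^ (2 / p)) :
    Tendsto (fun k => f (x k)) atTop (nhds fstar) ∧
      ∃ xbar ∈ Xstar, Tendsto x atTop (nhds xbar) := by
  obtain ⟨xs, hxs⟩ := hne
  simp only [← isMinOn_iff] at hXstar
  have hxs_min : IsMinOn f X xs := by rw [hXstar] at hxs; exact hxs.2
  set t : ℕ → ℝ := fun k => (f (x k) - fstar) ^ (2 / p)
  have ht : ∀ k, 0 ≤ t k := fun k => Real.rpow_nonneg (sub_nonneg.2 (hf k)) _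
  set c := γlo * (2 - γhi) * (C ^ 2 / m ^ 2)
  have hc : 0 < c := by
    have : 0 < m := by linarith
    have : 0 < 2 - γhi := by linarith
    positivity
  have hdesc : ∀ z ∈ Xstar, ∀ k, c * t k ≤ dist (x k) z ^ 2 - dist (x (k + 1)) z ^ 2 :=
    fun z hz k => by
      simpa only [dist_eq_norm] using mul_le_sub_of_le_sub_mul_two_sub hγlo.le (hγ k) hγhi.le
        (by positivity) (ht k) (hBI z hz k)
  have hct : ∀ k, 0 ≤ c * t k := fun k => mul_nonneg hc.le (ht k)
  have hsum : Summable t := (summable_mul_left_iff hc.ne').1 <|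
    summable_of_le_sub_succ hct (fun k => sq_nonneg _) (hdesc xs hxs)
  have hfx : Tendsto (fun k => f (x k)) atTop (𝓝 fstar) := tendsto_sub_nhds_zero_iff.1 <|
    tendsto_zero_of_tendsto_rpow_zero (div_pos two_pos hp) (fun k => sub_nonneg.2 (hf k))
      hsum.tendsto_atTop_zero
  refine ⟨hfx, exists_tendsto_of_antitone_dist ⟨xs, hxs⟩
    (fun z hz => antitone_of_le_sq_sub_sq (fun _ => dist_nonneg) hct (hdesc z hz)) fun a ha => ?_⟩
  rw [← hfstar xs hxs] at hfx
  exact hXstar ▸ ha.isMinOn_of_tendsto hXc (.of_forall hxX) hcont.continuousAt hxs_min hfx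
end
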